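/- Let (u_j) and (w_j) be constant-speed paths [-1,1] → Y into a complete CAT(0) space Y with the same endpoints, where w_j is the geodesic between those endpoints. Suppose E(u_j) and E(w_j) denote their energies ∫|u'|² and that E(w_j) ≤ E(u_j) = 1 for all j and E(w_j) → 1. Then sup_{x∈[-1,1]} d(u_j(x), w_j(x)) → 0 as j → ∞. -/

import Mathlib

open Set Metric Filter

/-- A geodesic segment parametrized proportionally to arc length on `[a,b]`. -/
def GeodesicSeg {X : Type*} [MetricSpace X] (γ : ℝ → X) (a b : ℝ) : Prop :=
  ∀ s ∈ Set.Icc a b, ∀ t ∈ Set.Icc a b,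
    (b - a) * dist (γ s) (γ t) = dist (γ a) (γ b) * |s - t|

/-- The CAT(0) (NPC) midpoint comparison inequality. -/
def CAT0 (X : Type*) [MetricSpace X] : Prop :=
  ∀ x y z m : X, dist y m = dist y z / 2 → dist m z = dist y z / 2 →
    dist x m ^ 2 ≤ dist x y ^ 2 / 2 + dist x z ^ 2 / 2 - dist y z ^ 2 / 4

/-- The metric speed (metric derivative) of a path at a point. -/
noncomputable def mspeed {Y : Type*} [MetricSpace Y] (u : ℝ → Y) (s : ℝ) : ℝ :=
  limUnder (nhdsWithin (0:ℝ) {(0:ℝ)}ᶜ) (fun h => dist (u (s + h)) (u s) / |h|)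

/-- The energy `∫₋₁¹ |u'|²` of a path on `[-1,1]`. -/
noncomputable def energy {Y : Type*} [MetricSpace Y] (u : ℝ → Y) : ℝ :=
  ∫ s in (-1:ℝ)..(1:ℝ), (mspeed u s) ^ 2

/-!
A Lipschitz path has a metric derivative almost everywhere (the supremum of the derivatives of
the distance functions to a dense set of its points), so a path `u` of constant metric speed `c`
satisfies `d(u a, u b) ≤ c (b - a)`; its energy is `2c²`. Along the geodesic `w`, the CAT(0)
midpoint inequality makes `d(p, w y)² - k² y²` (`k` the speed of `w`) midpoint convex, so by a
maximum principle it lies below its chord. Applied to `p = u x`, whose distances to the common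
endpoints are at most `c (1 + x)` and `c (1 - x)`, this gives
`d(u x, w x)² ≤ (1 - x²)(E(u) - E(w)) / 2`.
-/

open MeasureTheory Topology
open scoped NNReal

namespace GeodesicSeg

variable {X : Type*} [MetricSpace X] {w : ℝ → X} {a b : ℝ}

theorem dist_eq (hw : GeodesicSeg w a b) (hab : a < b) {s t : ℝ} (hs : s ∈ Icc a b)
    (ht : t ∈ Icc a b) : dist (w s) (w t) = dist (w a) (w b) / (b - a) * |s - t| := by
  rw [div_mul_eq_mul_div, eq_div_iff (sub_pos.2 hab).ne', mul_comm, hw s hs t ht]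

theorem continuousOn (hw : GeodesicSeg w a b) (hab : a < b) : ContinuousOn w (Icc a b) :=
  (LipschitzOnWith.of_dist_le' fun _ hs _ ht => (hw.dist_eq hab hs ht).le).continuousOn

theorem mspeed_eq (hw : GeodesicSeg w a b) (hab : a < b) {s : ℝ} (hs : s ∈ Ioo a b) :
    mspeed w s = dist (w a) (w b) / (b - a) := by
  refine Tendsto.limUnder_eq (tendsto_const_nhds.congr' ?_)
  have hnhds : (fun h => s + h) ⁻¹' Icc a b ∈ 𝓝[≠] (0 : ℝ) :=
    nhdsWithin_le_nhds <| (continuous_const.add continuous_id).continuousAt.preimage_mem_nhds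
      (by simpa using Icc_mem_nhds hs.1 hs.2)
  filter_upwards [hnhds, self_mem_nhdsWithin] with h hh hne
  rw [hw.dist_eq hab hh (Ioo_subset_Icc_self hs), add_sub_cancel_left,
    mul_div_cancel_right₀ _ (abs_ne_zero.2 hne)]

end GeodesicSeg

theorem energy_eq_of_mspeed_eq {Y : Type*} [MetricSpace Y] {u : ℝ → Y} {c : ℝ}
    (hc : ∀ s ∈ Ioo (-1 : ℝ) 1, mspeed u s = c) : energy u = 2 * c ^ 2 := by
  rw [energy, intervalIntegral.integral_of_le (by norm_num), integral_Ioc_eq_integral_Ioo,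
    setIntegral_congr_fun measurableSet_Ioo fun s hs => by rw [hc s hs]]
  norm_num [Real.volume_real_Ioo]

theorem nonpos_on_Icc_of_midpoint_le {g : ℝ → ℝ} {a b : ℝ} (hg : ContinuousOn g (Icc a b))
    (hmid : ∀ s ∈ Icc a b, ∀ t ∈ Icc a b, g ((s + t) / 2) ≤ (g s + g t) / 2)
    (ha : g a ≤ 0) (hb : g b ≤ 0) : ∀ x ∈ Icc a b, g x ≤ 0 := by
  by_contra! ⟨x₀, hx₀, hpos⟩
  obtain ⟨z, hz, hzmax⟩ := isCompact_Icc.exists_isMaxOn ⟨x₀, hx₀⟩ hg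
  -- the leftmost maximum point `y` is interior, and `g` is strictly smaller just left of it
  set S := Icc a b ∩ g ⁻¹' {g z}
  have hS : IsClosed S := hg.preimage_isClosed_of_isClosed isClosed_Icc isClosed_singleton
  have hSbdd : BddBelow S := ⟨a, fun y hy => hy.1.1⟩
  obtain ⟨hy, hgy⟩ : sInf S ∈ S := hS.csInf_mem ⟨z, hz, rfl⟩ hSbdd
  set y := sInf S
  have hmax : g x₀ ≤ g z := hzmax hx₀
  have hgy : g y = g z := hgy
  have hya : a < y := lt_of_le_of_ne hy.1 fun h => by rw [← h] at hgy; linarith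
  have hyb : y < b := lt_of_le_of_ne hy.2 fun h => by rw [h] at hgy; linarith
  set r := min (y - a) (b - y)
  have hr0 : 0 < r := lt_min (sub_pos.2 hya) (sub_pos.2 hyb)
  have hl : y - r ∈ Icc a b := ⟨by linarith [min_le_left (y - a) (b - y)], by linarith⟩
  have hr : y + r ∈ Icc a b := ⟨by linarith, by linarith [min_le_right (y - a) (b - y)]⟩
  have hlt : g (y - r) < g z :=
    lt_of_le_of_ne (hzmax hl) fun h => (csInf_le hSbdd ⟨hl, h⟩).not_gt (by linarith)
  have hle : g (y + r) ≤ g z := hzmax hr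
  have hmid_y := hmid _ hl _ hr
  rw [show (y - r + (y + r)) / 2 = y by ring] at hmid_y
  linarith

theorem CAT0.dist_sq_le_of_geodesicSeg {Y : Type*} [MetricSpace Y] (hY : CAT0 Y) {w : ℝ → Y}
    {a b : ℝ} (hw : GeodesicSeg w a b) (hab : a < b) (p : Y) {x : ℝ} (hx : x ∈ Icc a b) :
    dist p (w x) ^ 2 ≤ ((b - x) * dist p (w a) ^ 2 + (x - a) * dist p (w b) ^ 2) / (b - a)
      - (x - a) * (b - x) * (dist (w a) (w b) / (b - a)) ^ 2 := by
  set k := dist (w a) (w b) / (b - a)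
  have hba : b - a ≠ 0 := (sub_pos.2 hab).ne'
  set g : ℝ → ℝ := fun y => dist p (w y) ^ 2 -
    (((b - y) * dist p (w a) ^ 2 + (y - a) * dist p (w b) ^ 2) / (b - a)
      - (y - a) * (b - y) * k ^ 2)
  suffices g x ≤ 0 by linarith
  refine nonpos_on_Icc_of_midpoint_le ?_ ?_ ?_ ?_ x hx
  · exact ((((continuous_const (y := p)).dist continuous_id).comp_continuousOn
      (hw.continuousOn hab)).pow 2).sub (Continuous.continuousOn (by fun_prop))
  · intro s hs t ht
    have hm : (s + t) / 2 ∈ Icc a b := ⟨by linarith [hs.1, ht.1], by linarith [hs.2, ht.2]⟩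
    have half : dist (w s) (w ((s + t) / 2)) = dist (w s) (w t) / 2 ∧
        dist (w ((s + t) / 2)) (w t) = dist (w s) (w t) / 2 := by
      rw [hw.dist_eq hab hs hm, hw.dist_eq hab hm ht, hw.dist_eq hab hs ht,
        show s - (s + t) / 2 = (s - t) / 2 by ring, show (s + t) / 2 - t = (s - t) / 2 by ring,
        abs_div, abs_two]
      constructor <;> ring
    have key := hY p (w s) (w t) (w ((s + t) / 2)) half.1 half.2
    rw [hw.dist_eq hab hs ht, mul_pow, sq_abs] at key
    linear_combination key
  all_goals simp [g, hba]

theorem HasDerivAt.tendsto_abs_slope_zero {f : ℝ → ℝ} {f' x : ℝ} (hf : HasDerivAt f f' x) :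
    Tendsto (fun h => |f (x + h) - f x| / |h|) (𝓝[≠] 0) (𝓝 |f'|) := by
  refine (hasDerivAt_iff_tendsto_slope_zero.1 hf).abs.congr fun h => ?_
  rw [smul_eq_mul, abs_mul, abs_inv, inv_mul_eq_div]

section MetricDerivative

variable {Y : Type*} [MetricSpace Y] {u : ℝ → Y} {K : ℝ≥0}

/-- Supremum of the derivatives of the distance functions to the points `u q`, `q ∈ ℚ`; for
Lipschitz `u` it is the metric derivative almost everywhere. -/
noncomputable def distDerivSup (u : ℝ → Y) (t : ℝ) : ℝ :=
  ⨆ q : ℚ, |deriv (fun s => dist (u s) (u q)) t|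

theorem LipschitzWith.abs_deriv_dist_le (hu : LipschitzWith K u) (y : Y) (t : ℝ) :
    |deriv (fun s => dist (u s) y) t| ≤ K := by
  have hf : LipschitzWith (1 * K) fun s => dist (u s) y := (LipschitzWith.dist_left y).comp hu
  simpa using norm_deriv_le_of_lipschitz (x₀ := t) hf

theorem LipschitzWith.abs_deriv_dist_le_distDerivSup (hu : LipschitzWith K u) (q : ℚ) (t : ℝ) :
    |deriv (fun s => dist (u s) (u q)) t| ≤ distDerivSup u t :=
  le_ciSup (f := fun q : ℚ => |deriv (fun s => dist (u s) (u q)) t|)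
    ⟨K, forall_mem_range.2 fun _ => hu.abs_deriv_dist_le _ t⟩ q

theorem distDerivSup_nonneg (t : ℝ) : 0 ≤ distDerivSup u t :=
  Real.iSup_nonneg fun _ => abs_nonneg _

theorem LipschitzWith.distDerivSup_le (hu : LipschitzWith K u) (t : ℝ) : distDerivSup u t ≤ K :=
  ciSup_le fun _ => hu.abs_deriv_dist_le _ t

theorem measurable_distDerivSup : Measurable (distDerivSup u) :=
  Measurable.iSup fun _ => (measurable_deriv _).abs

theorem LipschitzWith.locallyIntegrable_distDerivSup (hu : LipschitzWith K u) :
    LocallyIntegrable (distDerivSup u) volume :=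
  (locallyIntegrable_const (K : ℝ)).mono measurable_distDerivSup.aestronglyMeasurable <|
    ae_of_all _ fun t => by
      rw [Real.norm_of_nonneg (distDerivSup_nonneg t), Real.norm_eq_abs]
      exact (hu.distDerivSup_le t).trans (le_abs_self _)

theorem LipschitzWith.intervalIntegrable_distDerivSup (hu : LipschitzWith K u) (a b : ℝ) :
    IntervalIntegrable (distDerivSup u) volume a b :=
  intervalIntegrable_iff.2 <|
    (hu.locallyIntegrable_distDerivSup.integrableOn_isCompact isCompact_uIcc).mono_set
      uIoc_subset_uIcc

theorem LipschitzWith.dist_le_integral_distDerivSup (hu : LipschitzWith K u) {a b : ℝ}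
    (hab : a ≤ b) : dist (u a) (u b) ≤ ∫ t in a..b, distDerivSup u t := by
  have hq (q : ℚ) : dist (u a) (u q) - dist (u b) (u q) ≤ ∫ t in a..b, distDerivSup u t := by
    have hf : LipschitzWith (1 * K) fun s => dist (u s) (u q) := (LipschitzWith.dist_left _).comp hu
    have hac := (hf.lipschitzOnWith (s := uIcc a b)).absolutelyContinuousOnInterval
    calc dist (u a) (u q) - dist (u b) (u q)
        ≤ |∫ t in a..b, deriv (fun s => dist (u s) (u q)) t| := by
          rw [hac.integral_deriv_eq_sub, abs_sub_comm]
          exact le_abs_self _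
      _ ≤ ∫ t in a..b, |deriv (fun s => dist (u s) (u q)) t| :=
          intervalIntegral.abs_integral_le_integral_abs hab
      _ ≤ ∫ t in a..b, distDerivSup u t :=
          intervalIntegral.integral_mono_on hab hac.intervalIntegrable_deriv.abs
            (hu.intervalIntegrable_distDerivSup a b)
            fun t _ => hu.abs_deriv_dist_le_distDerivSup q t
  -- let `q → b` along the rationals
  simpa using Rat.denseRange_cast.induction_on
    (p := fun y => dist (u a) (u y) - dist (u b) (u y) ≤ ∫ t in a..b, distDerivSup u t) b
    (isClosed_le ((continuous_const.dist hu.continuous).sub (continuous_const.dist hu.continuous))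
      continuous_const) hq

theorem LipschitzWith.dist_le_abs_integral_distDerivSup (hu : LipschitzWith K u) (a b : ℝ) :
    dist (u a) (u b) ≤ |∫ t in a..b, distDerivSup u t| := by
  rcases le_total a b with hab | hba
  · exact (hu.dist_le_integral_distDerivSup hab).trans (le_abs_self _)
  · rw [dist_comm, intervalIntegral.integral_symm, abs_neg]
    exact (hu.dist_le_integral_distDerivSup hba).trans (le_abs_self _)

theorem LipschitzWith.ae_tendsto_distDerivSup (hu : LipschitzWith K u) :
    ∀ᵐ σ, Tendsto (fun h => dist (u (σ + h)) (u σ) / |h|) (𝓝[≠] 0)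
      (𝓝 (distDerivSup u σ)) := by
  have hdiff : ∀ᵐ σ, ∀ q : ℚ, DifferentiableAt ℝ (fun s => dist (u s) (u q)) σ :=
    ae_all_iff.2 fun q => ((LipschitzWith.dist_left (u q)).comp hu).ae_differentiableAt
  filter_upwards [hdiff,
    LocallyIntegrable.ae_hasDerivAt_integral hu.locallyIntegrable_distDerivSup] with σ hσ hF
  refine tendsto_order.2 ⟨fun r hr => ?_, fun r hr => ?_⟩
  · obtain ⟨q, hq⟩ := exists_lt_of_lt_ciSup hr
    filter_upwards [(hσ q).hasDerivAt.tendsto_abs_slope_zero.eventually (eventually_gt_nhds hq)]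
      with h hh
    exact hh.trans_le (div_le_div_of_nonneg_right (abs_dist_sub_le _ _ _) (abs_nonneg h))
  · rw [← abs_of_nonneg (distDerivSup_nonneg σ)] at hr
    filter_upwards [(hF 0).tendsto_abs_slope_zero.eventually (eventually_lt_nhds hr)] with h hh
    refine lt_of_le_of_lt (div_le_div_of_nonneg_right ?_ (abs_nonneg h)) hh
    rw [intervalIntegral.integral_interval_sub_left (hu.intervalIntegrable_distDerivSup _ _)
      (hu.intervalIntegrable_distDerivSup _ _), dist_comm]
    exact hu.dist_le_abs_integral_distDerivSup _ _

theorem LipschitzWith.dist_le_integral_mspeed (hu : LipschitzWith K u) {a b : ℝ} (hab : a ≤ b) :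
    dist (u a) (u b) ≤ ∫ t in a..b, mspeed u t := by
  rw [intervalIntegral.integral_congr_ae (f := mspeed u) (g := distDerivSup u)
    (hu.ae_tendsto_distDerivSup.mono fun _ h _ => h.limUnder_eq)]
  exact hu.dist_le_integral_distDerivSup hab

theorem LipschitzWith.dist_le_of_mspeed_eq (hu : LipschitzWith K u) {a b c : ℝ} (hab : a ≤ b)
    (hc : ∀ s ∈ Icc a b, mspeed u s = c) : dist (u a) (u b) ≤ c * (b - a) := by
  have := hu.dist_le_integral_mspeed hab
  rwa [intervalIntegral.integral_congr fun s hs => hc s (uIcc_of_le hab ▸ hs),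
    intervalIntegral.integral_const, smul_eq_mul, mul_comm] at this

end MetricDerivative

theorem CAT0.dist_sq_le_energy_sub {Y : Type*} [MetricSpace Y] (hY : CAT0 Y) {u w : ℝ → Y}
    {K : ℝ≥0} (hu : LipschitzWith K u) (hend0 : u (-1) = w (-1)) (hend1 : u 1 = w 1)
    (hw : GeodesicSeg w (-1) 1) {c : ℝ} (hc : ∀ s ∈ Icc (-1 : ℝ) 1, mspeed u s = c)
    {x : ℝ} (hx : x ∈ Icc (-1 : ℝ) 1) :
    dist (u x) (w x) ^ 2 ≤ (1 - x ^ 2) * (energy u - energy w) / 2 := by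
  have hEu : energy u = 2 * c ^ 2 :=
    energy_eq_of_mspeed_eq fun s hs => hc s (Ioo_subset_Icc_self hs)
  have hEw : energy w = 2 * (dist (w (-1)) (w 1) / 2) ^ 2 :=
    energy_eq_of_mspeed_eq fun s hs => by rw [hw.mspeed_eq (by norm_num) hs]; norm_num
  have hleft : dist (u x) (w (-1)) ^ 2 ≤ (c * (x + 1)) ^ 2 := by
    refine pow_le_pow_left₀ dist_nonneg ?_ 2
    rw [← hend0, dist_comm, ← sub_neg_eq_add]
    exact hu.dist_le_of_mspeed_eq hx.1 fun s hs => hc s ⟨hs.1, hs.2.trans hx.2⟩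
  have hright : dist (u x) (w 1) ^ 2 ≤ (c * (1 - x)) ^ 2 := by
    refine pow_le_pow_left₀ dist_nonneg ?_ 2
    rw [← hend1]
    exact hu.dist_le_of_mspeed_eq hx.2 fun s hs => hc s ⟨hx.1.trans hs.1, hs.2⟩
  have hcmp := hY.dist_sq_le_of_geodesicSeg hw (by norm_num) (u x) hx
  norm_num only [sub_neg_eq_add] at hcmp
  rw [hEu, hEw]
  linear_combination hcmp + mul_le_mul_of_nonneg_left hleft (by linarith [hx.2] : 0 ≤ 1 - x) / 2 +
    mul_le_mul_of_nonneg_left hright (by linarith [hx.1] : 0 ≤ x + 1) / 2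

theorem stmt10_general {Y : Type*} [MetricSpace Y] (hnpc : CAT0 Y)
    (u w : ℕ → ℝ → Y)
    (hLip : ∀ j, ∃ K : NNReal, LipschitzWith K (u j) ∧ LipschitzWith K (w j))
    (hend0 : ∀ j, u j (-1) = w j (-1))
    (hend1 : ∀ j, u j 1 = w j 1)
    (hwgeo : ∀ j, GeodesicSeg (w j) (-1) 1)
    (hconst : ∀ j, ∃ c : ℝ, ∀ s ∈ Set.Icc (-1:ℝ) 1, mspeed (u j) s = c)
    (hone : ∀ j, energy (u j) = 1)
    (hlim : Tendsto (fun j => energy (w j)) atTop (nhds 1)) :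
    Tendsto (fun j => ⨆ x : Set.Icc (-1:ℝ) 1, dist (u j x) (w j x)) atTop (nhds 0) := by
  have hsup (j : ℕ) :
      ⨆ x : Icc (-1 : ℝ) 1, dist (u j x) (w j x) ≤ √(|1 - energy (w j)| / 2) := by
    obtain ⟨K, hK, -⟩ := hLip j
    obtain ⟨c, hc⟩ := hconst j
    refine Real.iSup_le (fun ⟨x, hx⟩ => Real.le_sqrt_of_sq_le ?_) (Real.sqrt_nonneg _)
    have hx2 : 0 ≤ 1 - x ^ 2 := by nlinarith [hx.1, hx.2]
    calc dist (u j x) (w j x) ^ 2 ≤ (1 - x ^ 2) * (energy (u j) - energy (w j)) / 2 :=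
          hnpc.dist_sq_le_energy_sub hK (hend0 j) (hend1 j) (hwgeo j) hc hx
      _ ≤ (1 - x ^ 2) * |1 - energy (w j)| / 2 := by rw [hone j]; gcongr; exact le_abs_self _
      _ ≤ |1 - energy (w j)| / 2 := by nlinarith [abs_nonneg (1 - energy (w j)), sq_nonneg x]
  have hbound : Tendsto (fun j => √(|1 - energy (w j)| / 2)) atTop (𝓝 0) := by
    simpa using (((tendsto_const_nhds (x := (1 : ℝ))).sub hlim).abs.div_const 2).sqrt
  exact squeeze_zero (fun j => Real.iSup_nonneg fun _ => dist_nonneg) hsup hbound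

/-- If constant-speed paths `u_j` with energy `1` share endpoints with geodesics `w_j`
whose energies converge to `1`, then `u_j` and `w_j` become uniformly close. -/
theorem stmt10 {Y : Type*} [MetricSpace Y] [CompleteSpace Y] (hnpc : CAT0 Y)
    (u w : ℕ → ℝ → Y)
    (hLip : ∀ j, ∃ K : NNReal, LipschitzWith K (u j) ∧ LipschitzWith K (w j))
    (hend0 : ∀ j, u j (-1) = w j (-1))
    (hend1 : ∀ j, u j 1 = w j 1)
    (hwgeo : ∀ j, GeodesicSeg (w j) (-1) 1)
    (hconst : ∀ j, ∃ c : ℝ, ∀ s ∈ Set.Icc (-1:ℝ) 1, mspeed (u j) s = c)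
    (hle : ∀ j, energy (w j) ≤ energy (u j))
    (hone : ∀ j, energy (u j) = 1)
    (hlim : Tendsto (fun j => energy (w j)) atTop (nhds 1)) :
    Tendsto (fun j => ⨆ x : Set.Icc (-1:ℝ) 1, dist (u j x) (w j x)) atTop (nhds 0) :=
  stmt10_general hnpc u w hLip hend0 hend1 hwgeo hconst hone hlim
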